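/- arXiv:2011.05174 — 3 statements merged into one kernel-verified Lean document; each statement's English description precedes it below -/
import Mathlib

section
/- Let f : ℝ × ℝ^l × ℝ^d → ℝ^l be continuous in (t, u) and uniformly Lipschitz in s, let T > 0, q ∈ ℕ, and let u : [0, qT] → ℝ^d be constant on each interval [jT, (j+1)T) for j < q. Then for any initial value s₀ ∈ ℝ^l there exists a unique continuous function s* : [0, qT] → ℝ^l with s*(0) = s₀ that satisfies s'(t) = f(t, s(t), u(t)) on each open interval (jT, (j+1)T) for j < q. -/
/-!
On each piece `[jT, (j+1)T]` the input `u` is constant, so there the equation is an ODE whose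
vector field is continuous in time and globally `K`-Lipschitz in the state. Picard–Lindelöf only
gives solutions on intervals of length about `1/K`, but since the Lipschitz bound is global these
local solutions can be chained, with matching endpoint values, across the whole piece; chaining
the pieces in the same way gives `s*`. Uniqueness follows piece by piece from Grönwall's
inequality.
-/

open Set Real
open scoped NNReal

theorem piecewise_Iic_eqOn_Icc {α β : Type*} [LinearOrder α] {f g : α → β} {b c : α}
    (hc : f c = g c) : EqOn ((Iic c).piecewise f g) g (Icc c b) := fun t ht ↦ by
  rcases ht.1.eq_or_lt with rfl | hlt
  · simp [hc]
  · exact piecewise_eq_of_notMem _ _ _ (not_le.2 hlt)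

variable {E : Type*} [NormedAddCommGroup E] [NormedSpace ℝ E] {v : ℝ → E → E} {K : ℝ≥0}

namespace IsIntegralCurveOn

variable {γ γ' : ℝ → E} {s t : Set ℝ}

theorem congr_eqOn (h : IsIntegralCurveOn γ v s) (hs : EqOn γ' γ s) :
    IsIntegralCurveOn γ' v s := fun t ht ↦ by
  simpa only [hs ht] using (h t ht).congr_of_mem hs ht

theorem union_of_isClosed (hγs : IsIntegralCurveOn γ v s) (hγt : IsIntegralCurveOn γ v t)
    (hs : IsClosed s) (ht : IsClosed t) : IsIntegralCurveOn γ v (s ∪ t) := by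
  have within (c : Set ℝ) (hc : IsClosed c) (hγc : IsIntegralCurveOn γ v c) (x : ℝ) :
      HasDerivWithinAt γ (v x (γ x)) c x := by
    by_cases hx : x ∈ c
    · exact hγc x hx
    · exact HasFDerivWithinAt.of_notMem_closure (by rwa [hc.closure_eq])
  exact fun x _ ↦ (within s hs hγs x).union (within t ht hγt x)

theorem piecewise_Iic {α β : ℝ → E} {a b c : ℝ} (hac : a ≤ c) (hcb : c ≤ b)
    (hα : IsIntegralCurveOn α v (Icc a c)) (hβ : IsIntegralCurveOn β v (Icc c b))
    (hc : α c = β c) : IsIntegralCurveOn ((Iic c).piecewise α β) v (Icc a b) := by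
  rw [← Icc_union_Icc_eq_Icc hac hcb]
  exact union_of_isClosed (hα.congr_eqOn ((piecewise_eqOn _ _ _).mono Icc_subset_Iic_self))
    (hβ.congr_eqOn (piecewise_Iic_eqOn_Icc hc)) isClosed_Icc isClosed_Icc

end IsIntegralCurveOn

theorem ODE_solution_unique_of_hasDerivAt_Ioo {f g : ℝ → E} {a b : ℝ}
    (hv : ∀ t ∈ Ioo a b, LipschitzWith K (v t))
    (hf : ContinuousOn f (Icc a b)) (hf' : ∀ t ∈ Ioo a b, HasDerivAt f (v t (f t)) t)
    (hg : ContinuousOn g (Icc a b)) (hg' : ∀ t ∈ Ioo a b, HasDerivAt g (v t (g t)) t)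
    (ha : f a = g a) : EqOn f g (Icc a b) := by
  intro t ht
  rcases ht.1.eq_or_lt with rfl | hat
  · exact ha
  -- No derivative is known at `a`: apply Grönwall on `[a', t]` and let `a'` tend to `a`.
  have gronwall (a' : ℝ) (ha' : a' ∈ Ioo a t) :
      dist (f t) (g t) ≤ dist (f a') (g a') * exp (K * (t - a')) := by
    have hsub : Icc a' t ⊆ Icc a b := Icc_subset_Icc ha'.1.le ht.2
    have hsub' : Ico a' t ⊆ Ioo a b := fun r hr ↦ ⟨ha'.1.trans_le hr.1, hr.2.trans_le ht.2⟩
    exact dist_le_of_trajectories_ODE_of_mem (fun r hr ↦ (hv r (hsub' hr)).lipschitzOnWith)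
      (hf.mono hsub) (fun r hr ↦ (hf' r (hsub' hr)).hasDerivWithinAt) (fun _ _ ↦ mem_univ _)
      (hg.mono hsub) (fun r hr ↦ (hg' r (hsub' hr)).hasDerivWithinAt) (fun _ _ ↦ mem_univ _)
      le_rfl t ⟨ha'.2.le, le_rfl⟩
  have hcont :
      ContinuousWithinAt (fun a' ↦ dist (f a') (g a') * exp (K * (t - a'))) (Ioo a t) a := by
    have hsub : Ioo a t ⊆ Icc a b := fun r hr ↦ ⟨hr.1.le, hr.2.le.trans ht.2⟩
    have hmem : a ∈ Icc a b := ⟨le_rfl, hat.le.trans ht.2⟩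
    exact (((hf a hmem).mono hsub).dist ((hg a hmem).mono hsub)).mul
      (Continuous.continuousWithinAt (by fun_prop))
  have := continuousWithinAt_const.closure_le (by simp [closure_Ioo hat.ne, hat.le]) hcont
    gronwall
  rwa [ha, dist_self, zero_mul, dist_le_zero] at this

theorem ODE_solution_unique_of_hasDerivAt_pieces {τ : ℕ → ℝ} (hτ : Monotone τ)
    (hv : ∀ t, LipschitzWith K (v t)) {f g : ℝ → E} (n : ℕ)
    (hf : ContinuousOn f (Icc (τ 0) (τ n)))
    (hf' : ∀ k < n, ∀ t ∈ Ioo (τ k) (τ (k + 1)), HasDerivAt f (v t (f t)) t)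
    (hg : ContinuousOn g (Icc (τ 0) (τ n)))
    (hg' : ∀ k < n, ∀ t ∈ Ioo (τ k) (τ (k + 1)), HasDerivAt g (v t (g t)) t)
    (h₀ : f (τ 0) = g (τ 0)) : EqOn f g (Icc (τ 0) (τ n)) := by
  induction n with
  | zero => simpa using h₀
  | succ n ih =>
    have hsplit := Icc_union_Icc_eq_Icc (hτ n.zero_le) (hτ n.le_succ)
    have hleft := ih (hf.mono (hsplit ▸ subset_union_left))
      (fun k hk ↦ hf' k (hk.trans n.lt_succ_self)) (hg.mono (hsplit ▸ subset_union_left))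
      (fun k hk ↦ hg' k (hk.trans n.lt_succ_self))
    have hright := ODE_solution_unique_of_hasDerivAt_Ioo (fun t _ ↦ hv t)
      (hf.mono (hsplit ▸ subset_union_right)) (hf' n n.lt_succ_self)
      (hg.mono (hsplit ▸ subset_union_right)) (hg' n n.lt_succ_self)
      (hleft ⟨hτ n.zero_le, le_rfl⟩)
    exact hsplit ▸ hleft.union hright

section Existence

variable [CompleteSpace E]

theorem exists_isIntegralCurveOn_Icc_of_mul_le_half (hv : ∀ t, LipschitzWith K (v t))
    (hcont : ∀ x, Continuous (v · x)) {a b : ℝ} (hab : a ≤ b) (hKab : K * (b - a) ≤ 1 / 2)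
    (x₀ : E) : ∃ α : ℝ → E, α a = x₀ ∧ IsIntegralCurveOn α v (Icc a b) := by
  obtain ⟨C, hC⟩ := isCompact_Icc.exists_bound_of_continuousOn (hcont x₀).continuousOn
  set M := C.toNNReal
  have hM (t : ℝ) (ht : t ∈ Icc a b) : ‖v t x₀‖ ≤ M := (hC t ht).trans (le_coe_toNNReal C)
  -- As `K * (b - a) ≤ 1 / 2`, the field is bounded by `2 * M` on the ball of radius `ρ`,
  -- which a solution therefore cannot leave before time `b`.
  let ρ : ℝ≥0 := ⟨2 * M * (b - a), by have := sub_nonneg.2 hab; positivity⟩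
  have hpl : IsPicardLindelof v (t₀ := ⟨a, le_rfl, hab⟩) x₀ ρ 0 (2 * M) K :=
    { lipschitzOnWith := fun t _ ↦ (hv t).lipschitzOnWith
      continuousOn := fun x _ ↦ (hcont x).continuousOn
      norm_le := fun t ht x hx ↦ by
        have hx' : ‖x - x₀‖ ≤ ρ := mem_closedBall_iff_norm.1 hx
        calc ‖v t x‖ ≤ ‖v t x - v t x₀‖ + ‖v t x₀‖ := norm_le_norm_sub_add _ _
          _ ≤ K * ‖x - x₀‖ + M := add_le_add ((hv t).norm_sub_le x x₀) (hM t ht)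
          _ ≤ K * (2 * M * (b - a)) + M := by gcongr; exact hx'
          _ ≤ (2 * M : ℝ≥0) := by push_cast; nlinarith [M.coe_nonneg]
      mul_max_le := by
        simp only [NNReal.coe_mul, NNReal.coe_ofNat, NNReal.coe_zero, sub_self, sub_zero,
          max_eq_left (sub_nonneg.2 hab)]
        exact le_rfl }
  exact hpl.exists_eq_forall_mem_Icc_hasDerivWithinAt₀

theorem exists_isIntegralCurveOn_Icc (hv : ∀ t, LipschitzWith K (v t))
    (hcont : ∀ x, Continuous (v · x)) (a b : ℝ) (x₀ : E) :
    ∃ α : ℝ → E, α a = x₀ ∧ IsIntegralCurveOn α v (Icc a b) := by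
  set δ : ℝ := (2 * (K + 1))⁻¹
  have hδ : 0 < δ := by positivity
  have hKδ : K * δ ≤ 1 / 2 := by
    rw [mul_inv_le_iff₀ (by positivity)]
    linarith
  have steps (n : ℕ) :
      ∃ α : ℝ → E, α a = x₀ ∧ IsIntegralCurveOn α v (Icc a (a + n * δ)) := by
    induction n with
    | zero =>
      simpa using exists_isIntegralCurveOn_Icc_of_mul_le_half hv hcont le_rfl (by simp) x₀
    | succ n ih =>
      obtain ⟨α, hα₀, hα⟩ := ih
      set c := a + n * δ
      have hac : a ≤ c := le_add_of_nonneg_right (by positivity)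
      obtain ⟨β, hβ₀, hβ⟩ := exists_isIntegralCurveOn_Icc_of_mul_le_half hv hcont
        (a := c) (b := c + δ) (by linarith) (by simpa using hKδ) (α c)
      refine ⟨(Iic c).piecewise α β, by simp [hac, hα₀], ?_⟩
      rw [Nat.cast_succ, add_one_mul, ← add_assoc]
      exact hα.piecewise_Iic hac (by linarith) hβ hβ₀.symm
  obtain ⟨n, hn⟩ : ∃ n : ℕ, b ≤ a + n * δ := by
    obtain ⟨n, hn⟩ := exists_nat_ge ((b - a) / δ)
    exact ⟨n, by rw [div_le_iff₀ hδ] at hn; linarith⟩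
  obtain ⟨α, hα₀, hα⟩ := steps n
  exact ⟨α, hα₀, hα.mono (Icc_subset_Icc_right hn)⟩

theorem exists_continuousOn_isIntegralCurveOn_pieces {τ : ℕ → ℝ} (hτ : Monotone τ)
    {w : ℕ → ℝ → E → E} (hw : ∀ k t, LipschitzWith K (w k t))
    (hcont : ∀ k x, Continuous (w k · x)) (x₀ : E) (n : ℕ) :
    ∃ γ : ℝ → E, γ (τ 0) = x₀ ∧ ContinuousOn γ (Icc (τ 0) (τ n)) ∧
      ∀ k < n, IsIntegralCurveOn γ (w k) (Icc (τ k) (τ (k + 1))) := by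
  induction n with
  | zero => exact ⟨fun _ ↦ x₀, rfl, continuousOn_const, by simp⟩
  | succ n ih =>
    obtain ⟨γ, hγ₀, hγc, hγ⟩ := ih
    obtain ⟨β, hβ₀, hβ⟩ :=
      exists_isIntegralCurveOn_Icc (hw n) (hcont n) (τ n) (τ (n + 1)) (γ (τ n))
    have hleft : EqOn ((Iic (τ n)).piecewise γ β) γ (Icc (τ 0) (τ n)) :=
      (piecewise_eqOn _ _ _).mono Icc_subset_Iic_self
    have hright : EqOn ((Iic (τ n)).piecewise γ β) β (Icc (τ n) (τ (n + 1))) :=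
      piecewise_Iic_eqOn_Icc hβ₀.symm
    refine ⟨(Iic (τ n)).piecewise γ β, by simp [hτ n.zero_le, hγ₀], ?_, fun k hk ↦ ?_⟩
    · rw [← Icc_union_Icc_eq_Icc (hτ n.zero_le) (hτ n.le_succ)]
      exact (hγc.congr hleft).union_of_isClosed (hβ.continuousOn.congr hright)
        isClosed_Icc isClosed_Icc
    · rcases Nat.lt_succ_iff_lt_or_eq.1 hk with hk | rfl
      · exact (hγ k hk).congr_eqOn (hleft.mono (Icc_subset_Icc (hτ k.zero_le) (hτ hk)))
      · exact hβ.congr_eqOn hright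

end Existence

theorem piecewise_ode_existence_uniqueness (l d : ℕ)
    (f : ℝ → EuclideanSpace ℝ (Fin l) → EuclideanSpace ℝ (Fin d) → EuclideanSpace ℝ (Fin l))
    (hcont : ∀ s : EuclideanSpace ℝ (Fin l),
      Continuous fun p : ℝ × EuclideanSpace ℝ (Fin d) => f p.1 s p.2)
    (K : ℝ)
    (hlip : ∀ (t : ℝ) (u : EuclideanSpace ℝ (Fin d)) (s₁ s₂ : EuclideanSpace ℝ (Fin l)),
      ‖f t s₁ u - f t s₂ u‖ ≤ K * ‖s₁ - s₂‖)
    (T : ℝ) (hT : 0 < T) (q : ℕ)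
    (u : ℝ → EuclideanSpace ℝ (Fin d))
    (hu : ∀ j : ℕ, j < q → ∀ t ∈ Set.Ico ((j : ℝ) * T) (((j : ℝ) + 1) * T),
      u t = u ((j : ℝ) * T))
    (s₀ : EuclideanSpace ℝ (Fin l)) :
    ∃ s : ℝ → EuclideanSpace ℝ (Fin l),
      (ContinuousOn s (Set.Icc 0 ((q : ℝ) * T)) ∧ s 0 = s₀ ∧
        (∀ j : ℕ, j < q → ∀ t ∈ Set.Ioo ((j : ℝ) * T) (((j : ℝ) + 1) * T),
          HasDerivAt s (f t (s t) (u t)) t)) ∧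
      (∀ s₂ : ℝ → EuclideanSpace ℝ (Fin l),
        (ContinuousOn s₂ (Set.Icc 0 ((q : ℝ) * T)) ∧ s₂ 0 = s₀ ∧
          (∀ j : ℕ, j < q → ∀ t ∈ Set.Ioo ((j : ℝ) * T) (((j : ℝ) + 1) * T),
            HasDerivAt s₂ (f t (s₂ t) (u t)) t)) →
        Set.EqOn s s₂ (Set.Icc 0 ((q : ℝ) * T))) := by
  have hlip' (t : ℝ) (c : EuclideanSpace ℝ (Fin d)) : LipschitzWith K.toNNReal (f t · c) :=
    .of_dist_le' fun x y ↦ by simpa only [dist_eq_norm] using hlip t c x y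
  have hτ : Monotone fun j : ℕ ↦ (j : ℝ) * T := fun _ _ hij ↦
    mul_le_mul_of_nonneg_right (Nat.cast_le.2 hij) hT.le
  obtain ⟨s, hs₀, hsc, hs⟩ := exists_continuousOn_isIntegralCurveOn_pieces hτ
    (w := fun j t x ↦ f t x (u (j * T))) (fun j t ↦ hlip' t _)
    (fun j x ↦ (hcont x).comp (continuous_id.prodMk continuous_const)) s₀ q
  simp only [Nat.cast_zero, zero_mul, Nat.cast_succ] at hs₀ hsc hs
  have hs' : ∀ j < q, ∀ t ∈ Ioo ((j : ℝ) * T) ((j + 1) * T),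
      HasDerivAt s (f t (s t) (u t)) t := fun j hj t ht ↦ hu j hj t (Ioo_subset_Ico_self ht) ▸
      ((hs j hj).isIntegralCurveAt (Icc_mem_nhds ht.1 ht.2)).hasDerivAt
  refine ⟨s, ⟨hsc, hs₀, hs'⟩, fun s₂ ⟨hs₂c, hs₂₀, hs₂⟩ ↦ ?_⟩
  simpa using ODE_solution_unique_of_hasDerivAt_pieces hτ (v := fun t x ↦ f t x (u t))
    (fun t ↦ hlip' t _) q (by simpa using hsc) (by simpa using hs') (by simpa using hs₂c)
    (by simpa using hs₂) (by simp [hs₀, hs₂₀])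
end

section
/- Soundness of the single-step reachability over-approximation: suppose R̃_j is a collection of symbolic states covering R_{jT}, and for each symbolic state ([s]_k, u_k) in R̃_j validated simulation produces a box [s_{[j}]_k containing {s(t) : t ∈ [jT,(j+1)T], s solves s' = f(t,s,u_k) with s(jT) ∈ [s]_k}. Then the symbolic set R̃_{[j[} = {([s_{[j}]_k, u_k)} covers R_{[jT,(j+1)T)} (restricted to non-bottom states), given that the command is constant and equal to u_k on [jT,(j+1)T) along every trajectory passing through ([s]_k, u_k) at time jT. -/
/-- A box in `ℝ^l`: a product of `l` closed intervals. -/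
structure Box (n : ℕ) where
  lo : Fin n → ℝ
  hi : Fin n → ℝ

def Box.toSet {n : ℕ} (B : Box n) : Set (Fin n → ℝ) :=
  {x | ∀ i, x i ∈ Set.Icc (B.lo i) (B.hi i)}

theorem single_step_reachability_sound {l : ℕ} {U : Type*} {α ι : Type*}
    (f : ℝ → (Fin l → ℝ) → U → (Fin l → ℝ)) (T : ℝ) (hT : 0 < T) (j : ℕ)
    -- the symbolic set R̃_j and the boxes produced by validated simulation
    (Bj : ι → Box l) (cmds : ι → U) (Bstep : ι → Box l)
    -- the trajectories of the closed-loop system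
    (sfun : α → ℝ → (Fin l → ℝ)) (ufun : α → ℝ → U)
    -- the command is constant on the period [jT, (j+1)T)
    (huconst : ∀ a, ∀ t ∈ Set.Ico ((j : ℝ) * T) (((j : ℝ) + 1) * T),
      ufun a t = ufun a ((j : ℝ) * T))
    -- each trajectory solves the ODE on the period
    (hsol : ∀ a, ContinuousOn (sfun a) (Set.Icc ((j : ℝ) * T) (((j : ℝ) + 1) * T)) ∧
      ∀ t ∈ Set.Ioo ((j : ℝ) * T) (((j : ℝ) + 1) * T),
        HasDerivAt (sfun a) (f t (sfun a t) (ufun a t)) t)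
    -- R̃_j covers the reachable states at t = jT
    (hcover : ∀ a, ∃ k : ι, sfun a ((j : ℝ) * T) ∈ (Bj k).toSet ∧
      ufun a ((j : ℝ) * T) = cmds k)
    -- soundness of validated simulation for each symbolic state
    (hsim : ∀ k : ι, ∀ s : ℝ → (Fin l → ℝ),
      ContinuousOn s (Set.Icc ((j : ℝ) * T) (((j : ℝ) + 1) * T)) →
      (∀ t ∈ Set.Ioo ((j : ℝ) * T) (((j : ℝ) + 1) * T),
        HasDerivAt s (f t (s t) (cmds k)) t) →
      s ((j : ℝ) * T) ∈ (Bj k).toSet →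
      ∀ t ∈ Set.Icc ((j : ℝ) * T) (((j : ℝ) + 1) * T), s t ∈ (Bstep k).toSet) :
    -- conclusion: R̃_{[j[} covers the reachable states over [jT, (j+1)T)
    ∀ a, ∀ t ∈ Set.Ico ((j : ℝ) * T) (((j : ℝ) + 1) * T),
      ∃ k : ι, sfun a t ∈ (Bstep k).toSet ∧ ufun a t = cmds k := by
  intro a t ht
  obtain ⟨k, hmem, hu⟩ := hcover a
  refine ⟨k, ?_, (huconst a t ht).trans hu⟩
  obtain ⟨hc, hd⟩ := hsol a
  refine hsim k (sfun a) hc (fun t' ht' => ?_) hmem t ⟨ht.1, ht.2.le⟩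
  have := hd t' ht'
  rwa [huconst a t' ⟨ht'.1.le, ht'.2⟩, hu] at this
end

section
/- Soundness of multi-step validated simulation: if for i = 0, …, M-1 each box [s_{i+1}] satisfies s(t_{i+1}) ∈ [s_{i+1}] whenever s solves the ODE on [t_i, t_{i+1}] with s(t_i) ∈ [s_i], and each box [s_{[i]}] satisfies s(t) ∈ [s_{[i]}] for all t ∈ [t_i, t_{i+1}] under the same hypothesis, then for every solution s on [t₀, t_M] with s(t₀) ∈ [s₀]: s(t) ∈ ⋃_{i<M} [s_{[i]}] for all t ∈ [t₀, t_M] and s(t_M) ∈ [s_M]. -/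
/-- `s` solves the ODE `s' = f t s` on `[a, b]`. -/
def SolvesOn {l : ℕ} (f : ℝ → (Fin l → ℝ) → (Fin l → ℝ)) (s : ℝ → (Fin l → ℝ))
    (a b : ℝ) : Prop :=
  ContinuousOn s (Set.Icc a b) ∧ ∀ t ∈ Set.Ioo a b, HasDerivAt s (f t (s t)) t

theorem multi_step_validated_simulation_sound {l : ℕ}
    (f : ℝ → (Fin l → ℝ) → (Fin l → ℝ))
    (M : ℕ) (hM : 0 < M) (t : ℕ → ℝ) (ht : ∀ i, i < M → t i < t (i + 1))
    (Bs : ℕ → Box l) (Bstep : ℕ → Box l)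
    (hstep : ∀ i, i < M → ∀ s : ℝ → (Fin l → ℝ),
      SolvesOn f s (t i) (t (i + 1)) → s (t i) ∈ (Bs i).toSet →
      (s (t (i + 1)) ∈ (Bs (i + 1)).toSet ∧
        ∀ τ ∈ Set.Icc (t i) (t (i + 1)), s τ ∈ (Bstep i).toSet)) :
    ∀ s : ℝ → (Fin l → ℝ), SolvesOn f s (t 0) (t M) → s (t 0) ∈ (Bs 0).toSet →
      (∀ τ ∈ Set.Icc (t 0) (t M), ∃ i, i < M ∧ s τ ∈ (Bstep i).toSet) ∧
      s (t M) ∈ (Bs M).toSet := by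
  classical
  intro s hsol hs0
  -- monotonicity of t on [0, M]
  have tmono : ∀ i j : ℕ, i ≤ j → j ≤ M → t i ≤ t j := by
    intro i j hij hjM
    induction j with
    | zero => simp_all
    | succ n ih =>
      rcases Nat.lt_or_ge i (n+1) with h | h
      · exact le_trans (ih (by omega) (by omega)) (le_of_lt (ht n (by omega)))
      · have : i = n + 1 := by omega
        simp [this]
  -- restriction solves on subintervals
  have sub : ∀ i, i < M → SolvesOn f s (t i) (t (i+1)) := by
    intro i hi
    constructor
    · exact hsol.1.mono (Set.Icc_subset_Icc (tmono 0 i (by omega) (by omega))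
        (tmono (i+1) M (by omega) le_rfl))
    · intro τ hτ
      exact hsol.2 τ ⟨lt_of_le_of_lt (tmono 0 i (by omega) (by omega)) hτ.1,
        lt_of_lt_of_le hτ.2 (tmono (i+1) M (by omega) le_rfl)⟩
  -- induction: s (t i) ∈ Bs i
  have key : ∀ i, i ≤ M → s (t i) ∈ (Bs i).toSet := by
    intro i
    induction i with
    | zero => exact fun _ => hs0
    | succ n ih =>
      intro h
      exact (hstep n (by omega) s (sub n (by omega)) (ih (by omega))).1
  refine ⟨?_, key M le_rfl⟩
  intro τ hτ
  set P : ℕ → Prop := fun i => t i ≤ τ with hP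
  set i := Nat.findGreatest P (M - 1) with hi
  have hiM : i ≤ M - 1 := Nat.findGreatest_le _
  have hti : t i ≤ τ := Nat.findGreatest_spec (P := P) (Nat.zero_le _) hτ.1
  have hτi1 : τ ≤ t (i + 1) := by
    rcases Nat.lt_or_ge (M - 1) (i + 1) with h | h
    · have : i + 1 = M := by omega
      rw [this]; exact hτ.2
    · have := Nat.findGreatest_is_greatest (P := P) (Nat.lt_succ_self i) h
      exact le_of_not_ge this
  exact ⟨i, by omega, (hstep i (by omega) s (sub i (by omega)) (key i (by omega))).2 τ ⟨hti, hτi1⟩⟩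
end
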